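/- arXiv:1709.08701 — 2 statements merged into one kernel-verified Lean document; each statement's English description precedes it below -/
import Mathlib

section
/- Let I = I(C_{2n+1}) be the edge ideal of the odd cycle C_{2n+1}. Then I^(n+1) = I^{n+1} + (x_1 x_2 ⋯ x_{2n+1}), and moreover x_1 x_2 ⋯ x_{2n+1} ∉ I^{n+1} (so a single generator must be added to I^{n+1} to obtain I^(n+1)). -/
open MvPolynomial

noncomputable section

/-- The ideal generated by the variables indexed by `S`. -/
def varIdeal (K : Type*) [Field K] (N : ℕ) (S : Finset (Fin N)) :
    Ideal (MvPolynomial (Fin N) K) :=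
  Ideal.span ((fun i => (X i : MvPolynomial (Fin N) K)) '' S)

/-- The edge ideal of a graph `G`, generated by `X i * X j` for edges `{i, j}`. -/
def edgeIdeal (K : Type*) [Field K] {N : ℕ} (G : SimpleGraph (Fin N)) :
    Ideal (MvPolynomial (Fin N) K) :=
  Ideal.span {p | ∃ i j, G.Adj i j ∧ p = X i * X j}

/-- `S` is a vertex cover of `G`: every edge meets `S`. -/
def IsVertexCover {N : ℕ} (G : SimpleGraph (Fin N)) (S : Finset (Fin N)) : Prop :=
  ∀ ⦃i j : Fin N⦄, G.Adj i j → i ∈ S ∨ j ∈ S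

/-- `S` is a minimal vertex cover of `G`. -/
def IsMinVertexCover {N : ℕ} (G : SimpleGraph (Fin N)) (S : Finset (Fin N)) : Prop :=
  IsVertexCover G S ∧ ∀ T ⊂ S, ¬ IsVertexCover G T

/-- The `t`-th symbolic power of the edge ideal of `G`:
the intersection of the `t`-th powers of the minimal vertex cover primes. -/
def symbolicPower (K : Type*) [Field K] {N : ℕ} (G : SimpleGraph (Fin N)) (t : ℕ) :
    Ideal (MvPolynomial (Fin N) K) :=
  ⨅ (S : Finset (Fin N)) (_ : IsMinVertexCover G S), varIdeal K N S ^ t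

/-- The cycle graph on `Fin m`, with edges `{i, i+1 mod m}`. -/
def cycleGraph (m : ℕ) : SimpleGraph (Fin m) :=
  SimpleGraph.fromRel (fun i j => (j : ℕ) = ((i : ℕ) + 1) % m)

/-- The set `L(t)` of monomials of degree at least `2t` whose weight with respect to every
minimal vertex cover is at least `t`. -/
def Lset (K : Type*) [Field K] {N : ℕ} (G : SimpleGraph (Fin N)) (t : ℕ) :
    Set (MvPolynomial (Fin N) K) :=
  {p | ∃ a : Fin N →₀ ℕ, p = monomial a 1 ∧ 2 * t ≤ ∑ i, a i ∧
    ∀ S : Finset (Fin N), IsMinVertexCover G S → t ≤ ∑ i ∈ S, a i}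

/-- The set `D(t)` of monomials of degree less than `2t` whose weight with respect to every
minimal vertex cover is at least `t`. -/
def Dset (K : Type*) [Field K] {N : ℕ} (G : SimpleGraph (Fin N)) (t : ℕ) :
    Set (MvPolynomial (Fin N) K) :=
  {p | ∃ a : Fin N →₀ ℕ, p = monomial a 1 ∧ (∑ i, a i) < 2 * t ∧
    ∀ S : Finset (Fin N), IsMinVertexCover G S → t ≤ ∑ i ∈ S, a i}

/-- `α(J)`: the least total degree of a nonzero polynomial in `J`. -/
def alphaDeg {K : Type*} [Field K] {N : ℕ} (J : Ideal (MvPolynomial (Fin N) K)) : ℕ :=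
  sInf {d | ∃ f ∈ J, f ≠ 0 ∧ f.totalDegree = d}

/-- The symbolic defect: the minimal number of generators one must add to `I(G)^t`
to obtain the symbolic power `I(G)^(t)`. -/
def sdefect (K : Type*) [Field K] {N : ℕ} (G : SimpleGraph (Fin N)) (t : ℕ) : ℕ :=
  sInf {c | ∃ F : Finset (MvPolynomial (Fin N) K), F.card = c ∧
    symbolicPower K G t = edgeIdeal K G ^ t + Ideal.span (F : Set (MvPolynomial (Fin N) K))}

/-- The graph consisting of the odd cycle on vertices `0, …, 2n` (that is,
`x_1, …, x_{2n+1}`) together with one extra vertex `2n+1` (that is, `x_{2n+2}`)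
joined to vertex `0` (that is, `x_1`) by an edge. -/
def appendedCycle (n : ℕ) : SimpleGraph (Fin (2 * n + 2)) :=
  SimpleGraph.fromRel (fun i j =>
    ((j : ℕ) = (i : ℕ) + 1 ∧ (j : ℕ) ≤ 2 * n) ∨
    ((i : ℕ) = 2 * n ∧ (j : ℕ) = 0) ∨
    ((i : ℕ) = 0 ∧ (j : ℕ) = 2 * n + 1))

/-!
A monomial `x^a` lies in `I^(t)` iff `∑_{i ∈ S} a_i ≥ t` for every minimal vertex cover `S`.
If some `a_z = 0`, the vertices other than `z` form a path in the cycle, and on a path this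
weight condition already forces `x^a` to be a product of `t` edges: split off `min(a_u, a_v)`
copies of the first edge `uv` and recurse on the shorter path. Otherwise `x_1 ⋯ x_{2n+1}`
divides `x^a`. This product lies in `I^(n+1)` because every vertex cover of `C_{2n+1}` has at
least `n + 1` vertices, but not in `I^{n+1}`, all of whose monomials have degree `≥ 2n + 2`.
-/

section EdgeIdeal

variable {K : Type*} [Field K] {N : ℕ}

theorem varIdeal_pow_le_span_monomial (S : Finset (Fin N)) (t : ℕ) :
    varIdeal K N S ^ t ≤
      Ideal.span ((fun m => monomial m (1 : K)) '' {m | t ≤ ∑ i ∈ S, m i}) := by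
  induction t with
  | zero =>
    rw [pow_zero, Ideal.one_eq_top, top_le_iff, Ideal.eq_top_iff_one]
    exact Ideal.subset_span ⟨0, by simp, by simp⟩
  | succ t ih =>
    rw [pow_succ, varIdeal]
    refine (Ideal.mul_mono_left ih).trans ?_
    rw [Ideal.span_mul_span']
    refine Ideal.span_mono ?_
    rintro _ ⟨_, ⟨m, hm, rfl⟩, _, ⟨i, hi, rfl⟩, rfl⟩
    refine ⟨m + Finsupp.single i 1, ?_, by simp [X, monomial_mul]⟩
    simp only [Set.mem_ofPred_eq, Finsupp.add_apply, Finset.sum_add_distrib,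
      Finsupp.single_apply, Finset.sum_ite_eq, Finset.mem_coe.1 hi, if_true] at hm ⊢
    omega

theorem le_sum_of_mem_varIdeal_pow {S : Finset (Fin N)} {t : ℕ} {f : MvPolynomial (Fin N) K}
    (hf : f ∈ varIdeal K N S ^ t) {m : Fin N →₀ ℕ} (hm : m ∈ f.support) :
    t ≤ ∑ i ∈ S, m i := by
  obtain ⟨m', hm', hle⟩ :=
    mem_ideal_span_monomial_image.1 (varIdeal_pow_le_span_monomial S t hf) m hm
  exact le_trans hm' (Finset.sum_le_sum fun i _ => hle i)

theorem prod_X_mem_varIdeal_pow_card (S : Finset (Fin N)) :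
    ∏ i ∈ S, (X i : MvPolynomial (Fin N) K) ∈ varIdeal K N S ^ S.card := by
  rw [← Finset.prod_const]
  exact Ideal.prod_mem_prod fun i hi => Ideal.subset_span ⟨i, hi, rfl⟩

theorem edgeIdeal_le_varIdeal {G : SimpleGraph (Fin N)} {S : Finset (Fin N)}
    (hS : IsVertexCover G S) : edgeIdeal K G ≤ varIdeal K N S := by
  rw [edgeIdeal, Ideal.span_le]
  rintro _ ⟨i, j, hij, rfl⟩
  rcases hS hij with hi | hj
  · exact Ideal.mul_mem_right _ _ (Ideal.subset_span ⟨i, hi, rfl⟩)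
  · exact Ideal.mul_mem_left _ _ (Ideal.subset_span ⟨j, hj, rfl⟩)

theorem edgeIdeal_le_varIdeal_univ_sq (G : SimpleGraph (Fin N)) :
    edgeIdeal K G ≤ varIdeal K N Finset.univ ^ 2 := by
  rw [edgeIdeal, Ideal.span_le]
  rintro _ ⟨i, j, -, rfl⟩
  rw [sq]
  exact Ideal.mul_mem_mul (Ideal.subset_span ⟨i, by simp, rfl⟩)
    (Ideal.subset_span ⟨j, by simp, rfl⟩)

theorem prod_X_eq_monomial :
    ∏ i, (X i : MvPolynomial (Fin N) K) = monomial (∑ i, Finsupp.single i 1) 1 :=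
  (monomial_sum_one _ _).symm

theorem prod_X_dvd_monomial {a : Fin N →₀ ℕ} (ha : ∀ i, a i ≠ 0) :
    ∏ i, (X i : MvPolynomial (Fin N) K) ∣ monomial a 1 := by
  rw [prod_X_eq_monomial, monomial_dvd_monomial]
  refine ⟨Or.inr fun i => ?_, dvd_rfl⟩
  simpa [Finset.sum_apply', Finsupp.single_apply, Nat.one_le_iff_ne_zero] using ha i

theorem prod_X_notMem_edgeIdeal_pow (G : SimpleGraph (Fin N)) {t : ℕ} (ht : N < 2 * t) :
    ∏ i, (X i : MvPolynomial (Fin N) K) ∉ edgeIdeal K G ^ t := by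
  intro h
  have h2t : ∏ i, (X i : MvPolynomial (Fin N) K) ∈ varIdeal K N Finset.univ ^ (2 * t) := by
    rw [pow_mul]
    exact Ideal.pow_right_mono (edgeIdeal_le_varIdeal_univ_sq G) t h
  rw [prod_X_eq_monomial] at h2t
  have h2tN : 2 * t ≤ N := by
    simpa [Finset.sum_apply', Finsupp.single_apply] using
      le_sum_of_mem_varIdeal_pow h2t (m := ∑ i, Finsupp.single i 1) (by simp)
  omega

theorem IsVertexCover.exists_isMinVertexCover_subset {G : SimpleGraph (Fin N)}
    {T : Finset (Fin N)} (hT : IsVertexCover G T) : ∃ S ⊆ T, IsMinVertexCover G S := by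
  obtain ⟨S, hST, hS⟩ :=
    (Set.toFinite {S : Finset (Fin N) | IsVertexCover G S}).exists_le_minimal hT
  exact ⟨S, hST, hS.prop, fun T' hT' hcov => hT'.2 (hS.2 hcov hT'.1)⟩

theorem le_sum_of_mem_symbolicPower {G : SimpleGraph (Fin N)} {t : ℕ}
    {f : MvPolynomial (Fin N) K} (hf : f ∈ symbolicPower K G t) {S : Finset (Fin N)}
    (hS : IsMinVertexCover G S) {m : Fin N →₀ ℕ} (hm : m ∈ f.support) :
    t ≤ ∑ i ∈ S, m i := by
  simp only [symbolicPower, Ideal.mem_iInf] at hf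
  exact le_sum_of_mem_varIdeal_pow (hf S hS) hm

theorem edgeIdeal_pow_le_symbolicPower (G : SimpleGraph (Fin N)) (t : ℕ) :
    edgeIdeal K G ^ t ≤ symbolicPower K G t :=
  le_iInf₂ fun _ hS => Ideal.pow_right_mono (edgeIdeal_le_varIdeal hS.1) t

theorem mem_of_forall_monomial_mem {J : Ideal (MvPolynomial (Fin N) K)}
    {f : MvPolynomial (Fin N) K} (h : ∀ m ∈ f.support, monomial m 1 ∈ J) : f ∈ J := by
  rw [f.as_sum]
  refine J.sum_mem fun m hm => ?_
  simpa [C_mul_monomial] using J.mul_mem_left (C (coeff m f)) (h m hm)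

end EdgeIdeal

section Finsupp

variable {σ : Type*} [DecidableEq σ]

theorem min_smul_single_add_single_le (a : σ →₀ ℕ) {u v : σ} (huv : u ≠ v) :
    min (a u) (a v) • (Finsupp.single u 1 + Finsupp.single v 1) ≤ a := fun i => by
  simp only [Finsupp.smul_apply, Finsupp.add_apply, Finsupp.single_apply, smul_eq_mul]
  split_ifs with hui hvi hvi
  · exact absurd (hui.trans hvi.symm) huv
  · simp only [← hui, add_zero, mul_one]
    exact min_le_left _ _
  · simp only [← hvi, zero_add, mul_one]
    exact min_le_right _ _
  · simp

theorem sum_add_smul_single_add_single_apply (T : Finset σ) (b : σ →₀ ℕ) (k : ℕ) (u v : σ) :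
    ∑ i ∈ T, (b + k • (Finsupp.single u 1 + Finsupp.single v 1) : σ →₀ ℕ) i =
      ∑ i ∈ T, b i + k * ((if u ∈ T then 1 else 0) + (if v ∈ T then 1 else 0)) := by
  simp only [Finsupp.add_apply, Finsupp.smul_apply, Finsupp.single_apply, smul_eq_mul,
    Finset.sum_add_distrib, ← Finset.mul_sum, Finset.sum_ite_eq]

end Finsupp

theorem isChain_or_mem_mono {α : Type*} {p : List α} {T T' : Finset α} (hTT' : T ⊆ T')
    (hT : p.IsChain fun u v => u ∈ T ∨ v ∈ T) : p.IsChain fun u v => u ∈ T' ∨ v ∈ T' :=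
  hT.imp fun _ _ => Or.imp (@hTT' _) (@hTT' _)

section Path

variable {K : Type*} [Field K] {N : ℕ} {G : SimpleGraph (Fin N)}

theorem mul_X_mem_edgeIdeal {i j : Fin N} (h : G.Adj i j) :
    X i * X j ∈ edgeIdeal K G :=
  Ideal.subset_span ⟨i, j, h, rfl⟩

theorem monomial_add_smul_edge_mem_edgeIdeal_pow {u v : Fin N} (huv : G.Adj u v) {b : Fin N →₀ ℕ}
    {k t : ℕ} (hb : monomial b (1 : K) ∈ edgeIdeal K G ^ (t - k)) :
    monomial (b + k • (Finsupp.single u 1 + Finsupp.single v 1)) (1 : K) ∈ edgeIdeal K G ^ t := by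
  have hedge : monomial (k • (Finsupp.single u 1 + Finsupp.single v 1)) (1 : K) =
      (X u * X v) ^ k := by
    rw [X, X, monomial_mul, monomial_pow, one_mul, one_pow]
  rw [← one_mul (1 : K), ← monomial_mul, hedge]
  refine Ideal.pow_le_pow_right (by omega : t ≤ t - k + k) ?_
  rw [pow_add]
  exact Ideal.mul_mem_mul hb (Ideal.pow_mem_pow (mul_X_mem_edgeIdeal huv) k)

theorem monomial_mem_edgeIdeal_pow_of_isChain :
    ∀ (p : List (Fin N)) {a : Fin N →₀ ℕ} {t : ℕ}, p.IsChain G.Adj → p.Nodup →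
      (∀ T ⊆ p.toFinset, p.IsChain (fun u v => u ∈ T ∨ v ∈ T) → t ≤ ∑ i ∈ T, a i) →
      monomial a (1 : K) ∈ edgeIdeal K G ^ t
  | [], a, t, _, _, ha | [_], a, t, _, _, ha => by
    obtain rfl : t = 0 := Nat.le_zero.1 (ha ∅ (Finset.empty_subset _) (by simp))
    simp
  | u :: v :: p, a, t, hG, hp, ha => by
    obtain ⟨huv, hG⟩ := List.isChain_cons_cons.1 hG
    have hu : u ∉ v :: p := (List.nodup_cons.1 hp).1
    have hv : v ∉ p := (List.nodup_cons.1 (List.nodup_cons.1 hp).2).1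
    -- Split off `k = min (a u) (a v)` copies of the edge `uv`. Then `u` or `v` has weight `0`:
    -- in the first case drop `u`; in the second, `v` joins every cover of `p` for free, so
    -- drop both `u` and `v`.
    set k := min (a u) (a v)
    obtain ⟨b, hb⟩ : ∃ b, a = b + k • (Finsupp.single u 1 + Finsupp.single v 1) :=
      ⟨_, (tsub_add_cancel_of_le (min_smul_single_add_single_le a huv.ne)).symm⟩
    have hsum (T : Finset (Fin N)) : ∑ i ∈ T, a i =
        ∑ i ∈ T, b i + k * ((if u ∈ T then 1 else 0) + (if v ∈ T then 1 else 0)) := by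
      rw [hb, sum_add_smul_single_add_single_apply]
    rw [hb]
    refine monomial_add_smul_edge_mem_edgeIdeal_pow huv ?_
    rcases le_total (a u) (a v) with h | h
    · have hk : k = a u := min_eq_left h
      refine monomial_mem_edgeIdeal_pow_of_isChain (v :: p) hG hp.of_cons fun T hT hTc => ?_
      have huT : u ∉ T := fun h => hu (List.mem_toFinset.1 (hT h))
      by_cases hvT : v ∈ T
      · have := ha T (hT.trans (by simp)) (List.isChain_cons_cons.2 ⟨Or.inr hvT, hTc⟩)
        rw [hsum, if_neg huT, if_pos hvT] at this
        omega
      · have := ha (insert u T) (Finset.insert_subset (by simp) (hT.trans (by simp)))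
          (List.isChain_cons_cons.2 ⟨Or.inl (Finset.mem_insert_self u T),
            isChain_or_mem_mono (Finset.subset_insert _ _) hTc⟩)
        rw [Finset.sum_insert huT, hsum, if_neg huT, if_neg hvT] at this
        omega
    · have hk : k = a v := min_eq_right h
      refine monomial_mem_edgeIdeal_pow_of_isChain p hG.tail hp.of_cons.of_cons fun T hT hTc => ?_
      have huT : u ∉ T := fun h => hu (List.mem_cons_of_mem _ (List.mem_toFinset.1 (hT h)))
      have hvT : v ∉ T := fun h => hv (List.mem_toFinset.1 (hT h))
      have := ha (insert v T) (Finset.insert_subset (by simp)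
          (hT.trans fun x hx => by simp [List.mem_toFinset.1 hx]))
        (List.isChain_cons_cons.2 ⟨Or.inr (Finset.mem_insert_self v T),
          List.isChain_cons.2 ⟨fun _ _ => Or.inl (Finset.mem_insert_self v T),
            isChain_or_mem_mono (Finset.subset_insert _ _) hTc⟩⟩)
      rw [Finset.sum_insert hvT, hsum, if_neg huT, if_neg hvT] at this
      omega

end Path

section Cycle

open Fin.NatCast

variable {m : ℕ} [NeZero m]

theorem cycleGraph_adj_iff {i j : Fin m} :
    (cycleGraph m).Adj i j ↔ i ≠ j ∧ (j = i + 1 ∨ i = j + 1) := by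
  simp only [cycleGraph, SimpleGraph.fromRel_adj, Fin.ext_iff, Fin.val_add, Fin.val_one',
    Nat.add_mod_mod]

theorem cycleGraph_adj_add_one (hm : 2 ≤ m) (i : Fin m) : (cycleGraph m).Adj i (i + 1) := by
  refine cycleGraph_adj_iff.2 ⟨fun h => ?_, Or.inl rfl⟩
  have := Fin.one_eq_zero_iff.1 (left_eq_add.1 h)
  omega

theorem isVertexCover_cycleGraph_iff (hm : 2 ≤ m) {S : Finset (Fin m)} :
    IsVertexCover (cycleGraph m) S ↔ ∀ i, i ∈ S ∨ i + 1 ∈ S := by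
  refine ⟨fun hS i => hS (cycleGraph_adj_add_one hm i), fun hS i j hij => ?_⟩
  rcases (cycleGraph_adj_iff.1 hij).2 with rfl | rfl
  · exact hS i
  · exact (hS j).symm

theorem le_two_mul_card_of_isVertexCover_cycleGraph (hm : 2 ≤ m) {S : Finset (Fin m)}
    (hS : IsVertexCover (cycleGraph m) S) : m ≤ 2 * S.card := by
  have hcov := (isVertexCover_cycleGraph_iff hm).1 hS
  have hshift : ∑ i : Fin m, (if i + 1 ∈ S then 1 else 0) = ∑ i : Fin m, (if i ∈ S then 1 else 0) :=
    Fintype.sum_equiv (Equiv.addRight 1) _ _ fun _ => rfl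
  calc m = ∑ _i : Fin m, 1 := by simp
    _ ≤ ∑ i : Fin m, ((if i ∈ S then 1 else 0) + (if i + 1 ∈ S then 1 else 0)) :=
        Finset.sum_le_sum fun i _ => by rcases hcov i with h | h <;> simp [h]
    _ = 2 * S.card := by rw [Finset.sum_add_distrib, hshift, Finset.sum_boole]; simp [two_mul]

def cyclePathAvoiding (z : Fin m) : List (Fin m) :=
  (List.range (m - 1)).map fun k : ℕ => z + 1 + (k : Fin m)

theorem isChain_adj_cyclePathAvoiding (hm : 2 ≤ m) (z : Fin m) :
    (cyclePathAvoiding z).IsChain (cycleGraph m).Adj := by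
  rw [cyclePathAvoiding, List.isChain_map, List.isChain_range]
  intro k _
  rw [Nat.succ_eq_add_one, Nat.cast_succ, ← add_assoc]
  exact cycleGraph_adj_add_one hm _

theorem nodup_cyclePathAvoiding (z : Fin m) : (cyclePathAvoiding z).Nodup := by
  refine List.nodup_range.map_on fun k hk l hl hkl => ?_
  have := congrArg Fin.val (add_left_cancel hkl)
  rw [List.mem_range] at hk hl
  rwa [Fin.val_natCast, Fin.val_natCast, Nat.mod_eq_of_lt (by omega),
    Nat.mod_eq_of_lt (by omega)] at this

theorem isVertexCover_insert_of_isChain_cyclePathAvoiding (hm : 2 ≤ m) {z : Fin m}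
    {T : Finset (Fin m)} (hT : (cyclePathAvoiding z).IsChain fun u v => u ∈ T ∨ v ∈ T) :
    IsVertexCover (cycleGraph m) (insert z T) := by
  rw [cyclePathAvoiding, List.isChain_map, List.isChain_range] at hT
  refine (isVertexCover_cycleGraph_iff hm).2 fun i => ?_
  by_cases hi : i = z
  · exact Or.inl (hi ▸ Finset.mem_insert_self _ _)
  by_cases hi' : i + 1 = z
  · exact Or.inr (hi' ▸ Finset.mem_insert_self _ _)
  set k := (i - (z + 1)).val
  have hk : z + 1 + (k : Fin m) = i := by simp [k]
  have hk' : z + 1 + ((k + 1 : ℕ) : Fin m) = i + 1 := by rw [Nat.cast_succ, ← add_assoc, hk]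
  have hlast : z + 1 + ((m - 1 : ℕ) : Fin m) = z := by
    rw [add_assoc, add_comm 1, ← Nat.cast_add_one, Nat.sub_add_cancel NeZero.one_le,
      Fin.natCast_self, add_zero]
  have hkm : k + 1 < m - 1 := by
    have : k ≠ m - 1 := fun h => hi (by rw [← hk, h, hlast])
    have : k + 1 ≠ m - 1 := fun h => hi' (by rw [← hk', h, hlast])
    have : k < m := Fin.isLt _
    omega
  rcases hT k (by omega) with h | h
  · exact Or.inl (Finset.mem_insert_of_mem (hk ▸ h))
  · exact Or.inr (Finset.mem_insert_of_mem (hk' ▸ h))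

end Cycle

section CycleSymbolicPower

variable {K : Type*} [Field K] {m : ℕ} [NeZero m]

theorem monomial_mem_edgeIdeal_cycleGraph_pow_of_apply_eq_zero (hm : 2 ≤ m)
    {a : Fin m →₀ ℕ} {z : Fin m} (hz : a z = 0) {t : ℕ}
    (ha : ∀ S, IsMinVertexCover (cycleGraph m) S → t ≤ ∑ i ∈ S, a i) :
    monomial a (1 : K) ∈ edgeIdeal K (cycleGraph m) ^ t := by
  refine monomial_mem_edgeIdeal_pow_of_isChain _ (isChain_adj_cyclePathAvoiding hm z)
    (nodup_cyclePathAvoiding z) fun T _ hT => ?_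
  obtain ⟨S, hST, hS⟩ :=
    (isVertexCover_insert_of_isChain_cyclePathAvoiding hm hT).exists_isMinVertexCover_subset
  calc t ≤ ∑ i ∈ S, a i := ha S hS
    _ ≤ ∑ i ∈ insert z T, a i := Finset.sum_le_sum_of_subset hST
    _ = ∑ i ∈ T, a i := Finset.sum_insert_zero hz

theorem symbolicPower_cycleGraph_le (hm : 2 ≤ m) (t : ℕ) :
    symbolicPower K (cycleGraph m) t ≤
      edgeIdeal K (cycleGraph m) ^ t + Ideal.span {∏ i, (X i : MvPolynomial (Fin m) K)} := by
  refine fun f hf => mem_of_forall_monomial_mem fun a ha => ?_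
  by_cases hz : ∃ z, a z = 0
  · obtain ⟨z, hz⟩ := hz
    exact Ideal.mem_sup_left (monomial_mem_edgeIdeal_cycleGraph_pow_of_apply_eq_zero hm hz
      fun S hS => le_sum_of_mem_symbolicPower hf hS ha)
  · push Not at hz
    exact Ideal.mem_sup_right (Ideal.mem_span_singleton.2 (prod_X_dvd_monomial hz))

theorem prod_X_mem_symbolicPower_cycleGraph (hm : 2 ≤ m) {t : ℕ} (ht : 2 * t ≤ m + 1) :
    ∏ i, (X i : MvPolynomial (Fin m) K) ∈ symbolicPower K (cycleGraph m) t := by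
  simp only [symbolicPower, Ideal.mem_iInf]
  intro S hS
  have hcard : t ≤ S.card := by
    have := le_two_mul_card_of_isVertexCover_cycleGraph hm hS.1
    omega
  exact Ideal.mem_of_dvd _ (Finset.prod_dvd_prod_of_subset _ _ _ (Finset.subset_univ S))
    (Ideal.pow_le_pow_right hcard (prod_X_mem_varIdeal_pow_card S))

end CycleSymbolicPower

/-- For the edge ideal of the odd cycle `C_{2n+1}`,
`I^(n+1) = I^{n+1} + (x_1 x_2 ⋯ x_{2n+1})`, and the product of all the variables
does not lie in `I^{n+1}`. -/
theorem symbolicPower_succ_eq (K : Type*) [Field K] (n : ℕ) (hn : 1 ≤ n) :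
    symbolicPower K (cycleGraph (2 * n + 1)) (n + 1)
      = edgeIdeal K (cycleGraph (2 * n + 1)) ^ (n + 1)
        + Ideal.span {∏ i, (X i : MvPolynomial (Fin (2 * n + 1)) K)}
    ∧ (∏ i, (X i : MvPolynomial (Fin (2 * n + 1)) K))
        ∉ edgeIdeal K (cycleGraph (2 * n + 1)) ^ (n + 1) := by
  have hm : 2 ≤ 2 * n + 1 := by omega
  refine ⟨le_antisymm (symbolicPower_cycleGraph_le hm _) (sup_le ?_ ?_),
    prod_X_notMem_edgeIdeal_pow _ (by omega)⟩
  · exact edgeIdeal_pow_le_symbolicPower _ _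
  · rw [Ideal.span_le, Set.singleton_subset_iff]
    exact prod_X_mem_symbolicPower_cycleGraph hm (by omega)
end
end

section
/- Let K_N be the complete graph on vertices x_1,…,x_N (N ≥ 2) and let I = I(K_N) be its edge ideal. Then for every t ≥ 1, I^t = (L(t)) and consequently I^(t) = I^t + (D(t)). -/
open MvPolynomial

noncomputable section

/-!
Every ideal involved is a monomial ideal, and `x^a ∈ P_S^t` exactly when the `S`-weight of `a` is
at least `t`; hence `I^(t)` is spanned by the monomials of `L(t) ∪ D(t)`, for any graph. A product
of `t` edges has degree `2t` and weight at least `t` on every vertex cover, so `I^t ⊆ (L(t))`.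
For `K_N` the minimal vertex covers are the complements of single vertices, so `x^a ∈ L(t)` means
`deg a ≥ 2t` and `a_v + t ≤ deg a` for all `v`. Dividing such a monomial by `x_i x_j`, where `a_i`
and `a_j` are the two largest exponents, preserves these conditions with `t - 1`, so by induction
`x^a` is a product of `t` edges times a monomial: `(L(t)) ⊆ I^t`.
-/

open Finset Finsupp

theorem Finsupp.sum_add_single_apply {ι : Type*} [DecidableEq ι] (s : Finset ι) (b : ι →₀ ℕ)
    (i : ι) (n : ℕ) :
    ∑ v ∈ s, (b + single i n) v = ∑ v ∈ s, b v + if i ∈ s then n else 0 := by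
  simp [sum_add_distrib, single_apply]

theorem Finsupp.exists_eq_add_single_add_single_of_le_sum {ι : Type*} [Fintype ι]
    [DecidableEq ι] {a : ι →₀ ℕ} {t : ℕ} (hdeg : 2 * (t + 1) ≤ ∑ v, a v)
    (hmax : ∀ v, a v + (t + 1) ≤ ∑ v, a v) :
    ∃ b i j, i ≠ j ∧ a = b + single i 1 + single j 1 ∧
      2 * t ≤ ∑ v, b v ∧ ∀ v, b v + t ≤ ∑ v, b v := by
  obtain ⟨i, -, hi⟩ := exists_max_image univ a (nonempty_of_sum_ne_zero (s := univ) (f := a)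
    (by omega))
  have hrest : ∑ v ∈ univ.erase i, a v + a i = ∑ v, a v := sum_erase_add _ _ (mem_univ i)
  have hrest_pos : ∑ v ∈ univ.erase i, a v ≠ 0 := by have := hmax i; omega
  obtain ⟨w, hw, hw0⟩ := exists_ne_zero_of_sum_ne_zero hrest_pos
  obtain ⟨j, hj, hj'⟩ := exists_max_image (univ.erase i) a ⟨w, hw⟩
  have hij : i ≠ j := fun h => (mem_erase.mp hj).1 h.symm
  have haj : 1 ≤ a j := (hj' w hw).trans' (Nat.one_le_iff_ne_zero.mpr hw0)
  have haji : a j ≤ a i := hi j (mem_univ j)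
  have hothers : ∀ v, v ≠ i → v ≠ j → a v + (t + 2) ≤ ∑ v, a v := by
    intro v hvi hvj
    have hvij := sum_le_sum_of_subset (f := a) (subset_univ {v, i, j})
    rw [sum_insert (by simp [hvi, hvj]), sum_insert (by simp [hij]), sum_singleton] at hvij
    have := hj' v (mem_erase.mpr ⟨hvi, mem_univ v⟩)
    have := hmax v
    -- otherwise `3 (deg a - t - 1) = 3 a v ≤ a v + a i + a j ≤ deg a`, against `deg a ≥ 2t + 2`
    omega
  obtain ⟨b, hb⟩ := le_iff_exists_add'.mp (show single i 1 + single j 1 ≤ a from fun v => by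
    simp only [coe_add, Pi.add_apply, single_apply]
    split_ifs with hiv hjv
    · exact absurd (hiv.trans hjv.symm) hij
    all_goals subst_vars; omega)
  rw [← add_assoc] at hb
  have hval : ∀ v, a v = b v + (if i = v then 1 else 0) + (if j = v then 1 else 0) := by
    simp [hb, single_apply]
  have hsum : ∑ v, a v = ∑ v, b v + 2 := by
    simp only [hb, sum_add_single_apply, mem_univ, if_true]
  refine ⟨b, i, j, hij, hb, by omega, fun v => ?_⟩
  have hv := hval v
  by_cases hvi : i = v
  · subst hvi; simp at hv; have := hmax i; omega
  by_cases hvj : j = v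
  · subst hvj; simp [hvi] at hv; have := hmax j; omega
  simp only [if_neg hvi, if_neg hvj] at hv
  have := hothers v (Ne.symm hvi) (Ne.symm hvj)
  omega

theorem MvPolynomial.mem_ideal_span_monomial_image_iff_of_isUpperSet {σ R : Type*}
    [CommSemiring R] {s : Set (σ →₀ ℕ)} (hs : IsUpperSet s) {f : MvPolynomial σ R} :
    f ∈ Ideal.span ((fun a => monomial a (1 : R)) '' s) ↔ ∀ a ∈ f.support, a ∈ s := by
  rw [mem_ideal_span_monomial_image]
  exact forall₂_congr fun a _ => ⟨fun ⟨b, hb, hba⟩ => hs hba hb, fun ha => ⟨a, ha, le_rfl⟩⟩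

theorem MvPolynomial.span_monomial_image_eq_top_of_zero_mem {σ R : Type*} [CommSemiring R]
    {s : Set (σ →₀ ℕ)} (hs : 0 ∈ s) : Ideal.span ((fun a => monomial a (1 : R)) '' s) = ⊤ :=
  (Ideal.eq_top_iff_one _).mpr (Ideal.subset_span ⟨0, hs, rfl⟩)

section

variable {K : Type*} [Field K] {N : ℕ}

theorem X_mem_varIdeal {S : Finset (Fin N)} {i : Fin N} (hi : i ∈ S) :
    (X i : MvPolynomial (Fin N) K) ∈ varIdeal K N S :=
  Ideal.subset_span ⟨i, hi, rfl⟩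

theorem monomial_mem_varIdeal_pow {S : Finset (Fin N)} {t : ℕ} {a : Fin N →₀ ℕ}
    (h : t ≤ ∑ i ∈ S, a i) : monomial a (1 : K) ∈ varIdeal K N S ^ t := by
  induction t generalizing a with
  | zero => simp
  | succ t ih =>
    obtain ⟨i, hi, hai⟩ := exists_ne_zero_of_sum_ne_zero (by omega : ∑ i ∈ S, a i ≠ 0)
    obtain ⟨b, rfl⟩ := le_iff_exists_add'.mp (single_le_iff.mpr (Nat.one_le_iff_ne_zero.mpr hai))
    rw [sum_add_single_apply, if_pos hi] at h
    rw [monomial_add_single, pow_one, pow_succ]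
    exact Ideal.mul_mem_mul (ih (by omega)) (X_mem_varIdeal hi)

theorem varIdeal_pow_eq_span_monomial (S : Finset (Fin N)) (t : ℕ) :
    varIdeal K N S ^ t =
      Ideal.span ((fun a => monomial a (1 : K)) '' {a | t ≤ ∑ i ∈ S, a i}) := by
  refine le_antisymm ?_ (Ideal.span_le.mpr ?_)
  · induction t with
    | zero => rw [span_monomial_image_eq_top_of_zero_mem (Nat.zero_le _)]; exact le_top
    | succ t ih =>
      rw [pow_succ]
      refine (Ideal.mul_mono_left ih).trans ?_
      rw [varIdeal, Ideal.span_mul_span', Ideal.span_le]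
      rintro _ ⟨_, ⟨a, ha, rfl⟩, _, ⟨i, hi, rfl⟩, rfl⟩
      refine Ideal.subset_span ⟨a + single i 1, ?_, by simp [monomial_add_single]⟩
      simp only [Set.mem_ofPred_eq, sum_add_single_apply, mem_coe.mp hi, if_true]
      exact Nat.add_le_add_right ha 1
  · rintro _ ⟨a, ha, rfl⟩
    exact monomial_mem_varIdeal_pow ha

theorem mem_varIdeal_pow_iff {S : Finset (Fin N)} {t : ℕ} {f : MvPolynomial (Fin N) K} :
    f ∈ varIdeal K N S ^ t ↔ ∀ a ∈ f.support, t ≤ ∑ i ∈ S, a i := by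
  rw [varIdeal_pow_eq_span_monomial, mem_ideal_span_monomial_image_iff_of_isUpperSet]
  · rfl
  · exact fun a b hab ha => ha.trans (sum_le_sum fun i _ => hab i)

def symbolicExponents (G : SimpleGraph (Fin N)) (t : ℕ) : Set (Fin N →₀ ℕ) :=
  {a | ∀ S, IsMinVertexCover G S → t ≤ ∑ i ∈ S, a i}

theorem isUpperSet_symbolicExponents (G : SimpleGraph (Fin N)) (t : ℕ) :
    IsUpperSet (symbolicExponents G t) :=
  fun _ _ hab ha S hS => (ha S hS).trans (sum_le_sum fun i _ => hab i)

theorem symbolicPower_eq_span_monomial (G : SimpleGraph (Fin N)) (t : ℕ) :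
    symbolicPower K G t =
      Ideal.span ((fun a => monomial a (1 : K)) '' symbolicExponents G t) := by
  ext f
  rw [mem_ideal_span_monomial_image_iff_of_isUpperSet (isUpperSet_symbolicExponents G t)]
  simp only [symbolicPower, Ideal.mem_iInf, mem_varIdeal_pow_iff, symbolicExponents,
    Set.mem_ofPred_eq]
  exact ⟨fun h a ha S hS => h S hS a ha, fun h S hS a ha => h a ha S hS⟩

theorem monomial_image_symbolicExponents (G : SimpleGraph (Fin N)) (t : ℕ) :
    (fun a => monomial a (1 : K)) '' symbolicExponents G t = Lset K G t ∪ Dset K G t := by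
  ext p
  constructor
  · rintro ⟨a, ha, rfl⟩
    rcases le_or_gt (2 * t) (∑ i, a i) with h | h
    exacts [.inl ⟨a, rfl, h, ha⟩, .inr ⟨a, rfl, h, ha⟩]
  · rintro (⟨a, rfl, -, ha⟩ | ⟨a, rfl, -, ha⟩) <;> exact ⟨a, ha, rfl⟩

theorem symbolicPower_eq_span_Lset_sup_span_Dset (G : SimpleGraph (Fin N)) (t : ℕ) :
    symbolicPower K G t = Ideal.span (Lset K G t) ⊔ Ideal.span (Dset K G t) := by
  rw [symbolicPower_eq_span_monomial, monomial_image_symbolicExponents, Ideal.span_union]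

theorem edgeIdeal_pow_le_span_Lset (G : SimpleGraph (Fin N)) (t : ℕ) :
    edgeIdeal K G ^ t ≤ Ideal.span (Lset K G t) := by
  induction t with
  | zero =>
    rw [pow_zero, Ideal.one_eq_top, top_le_iff, Ideal.eq_top_iff_one]
    exact Ideal.subset_span ⟨0, rfl, by simp, fun _ _ => Nat.zero_le _⟩
  | succ t ih =>
    rw [pow_succ]
    refine (Ideal.mul_mono_left ih).trans ?_
    rw [edgeIdeal, Ideal.span_mul_span', Ideal.span_le]
    rintro _ ⟨_, ⟨a, rfl, hdeg, hw⟩, _, ⟨i, j, hij, rfl⟩, rfl⟩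
    refine Ideal.subset_span ⟨a + single i 1 + single j 1,
      by simp [monomial_add_single, mul_assoc], ?_, fun S hS => ?_⟩
    · simp only [sum_add_single_apply, mem_univ, if_true]
      omega
    · have := hw S hS
      simp only [sum_add_single_apply]
      rcases hS.1 hij with h | h <;> simp only [h, if_true] <;> split_ifs <;> omega

theorem isMinVertexCover_top_erase (v : Fin N) :
    IsMinVertexCover (⊤ : SimpleGraph (Fin N)) (univ.erase v) := by
  refine ⟨fun i j hij => ?_, fun T hT hcov => ?_⟩
  · simp only [mem_erase, mem_univ, and_true]
    by_contra! h
    exact hij (h.1.trans h.2.symm)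
  · obtain ⟨w, hw, hwT⟩ := exists_of_ssubset hT
    have hvT : v ∉ T := fun h => (mem_erase.mp (hT.subset h)).1 rfl
    exact (hcov (show (⊤ : SimpleGraph (Fin N)).Adj w v from (mem_erase.mp hw).1)).elim hwT hvT

theorem monomial_mem_edgeIdeal_top_pow {t : ℕ} {a : Fin N →₀ ℕ} (hdeg : 2 * t ≤ ∑ v, a v)
    (hmax : ∀ v, a v + t ≤ ∑ v, a v) :
    monomial a (1 : K) ∈ edgeIdeal K (⊤ : SimpleGraph (Fin N)) ^ t := by
  induction t generalizing a with
  | zero => simp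
  | succ t ih =>
    obtain ⟨b, i, j, hij, rfl, hbdeg, hbmax⟩ :=
      exists_eq_add_single_add_single_of_le_sum hdeg hmax
    rw [monomial_add_single, monomial_add_single, pow_one, pow_one, mul_assoc, pow_succ]
    exact Ideal.mul_mem_mul (ih hbdeg hbmax) (Ideal.subset_span ⟨i, j, hij, rfl⟩)

theorem edgeIdeal_top_pow_eq_span_Lset (t : ℕ) :
    edgeIdeal K (⊤ : SimpleGraph (Fin N)) ^ t = Ideal.span (Lset K ⊤ t) := by
  refine le_antisymm (edgeIdeal_pow_le_span_Lset ⊤ t) (Ideal.span_le.mpr ?_)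
  rintro _ ⟨a, rfl, hdeg, hw⟩
  refine monomial_mem_edgeIdeal_top_pow hdeg fun v => ?_
  have := hw _ (isMinVertexCover_top_erase v)
  have := sum_erase_add univ a (mem_univ v)
  omega

end

theorem completeGraph_decomposition_general (K : Type*) [Field K] (N t : ℕ) :
    edgeIdeal K (⊤ : SimpleGraph (Fin N)) ^ t
        = Ideal.span (Lset K (⊤ : SimpleGraph (Fin N)) t)
    ∧ symbolicPower K (⊤ : SimpleGraph (Fin N)) t
        = edgeIdeal K (⊤ : SimpleGraph (Fin N)) ^ t
          + Ideal.span (Dset K (⊤ : SimpleGraph (Fin N)) t) := by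
  refine ⟨edgeIdeal_top_pow_eq_span_Lset t, ?_⟩
  rw [symbolicPower_eq_span_Lset_sup_span_Dset, edgeIdeal_top_pow_eq_span_Lset,
    Submodule.add_eq_sup]

/-- For the complete graph `K_N` (`N ≥ 2`), `I^t = (L(t))` and consequently
`I^(t) = I^t + (D(t))`. -/
theorem completeGraph_decomposition (K : Type*) [Field K] (N t : ℕ)
    (hN : 2 ≤ N) (ht : 1 ≤ t) :
    edgeIdeal K (⊤ : SimpleGraph (Fin N)) ^ t
        = Ideal.span (Lset K (⊤ : SimpleGraph (Fin N)) t)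
    ∧ symbolicPower K (⊤ : SimpleGraph (Fin N)) t
        = edgeIdeal K (⊤ : SimpleGraph (Fin N)) ^ t
          + Ideal.span (Dset K (⊤ : SimpleGraph (Fin N)) t) :=
  completeGraph_decomposition_general K N t
end
end
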